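/- Let q > 1 be real and n ≥ 1, d integers with 0 ≤ d ≤ n−1. Then, as an identity of polynomials in x (equivalently, for all real x): Σ_{r=0}^{n} (−1)^{n−r} q^{binom(n−r,2)} ( [n choose r]_q + ((1−q)[n]_q/[r]!_q) · Σ_{j=1}^{n−max(r,d)} q^{jr−d} · ([n−j]!_q/[n−r−j]!_q) · (q^{n−d−j+1}; q)_{j−1} ) · x^r = (∏_{i=0}^{n−1}(q^n − q^i)) · ( (x;q^{−1})_n/(q;q)_n + q^{−d} · Σ_{m=d}^{n−1} ([m]!_q·[n−d−1]!_q)/([m−d]!_q·[n−1]!_q) · (x;q^{−1})_m/(q;q)_m ). -/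

import Mathlib

/-!
Both sides are polynomials in `x`, so one expands the right side in powers of `x`. The
`q`-binomial theorem
  `q^C(m,2) (x; q⁻¹)_m = ∏_{i<m} (q^i - x) = ∑_r (-1)^r q^C(m-r,2) [m choose r]_q x^r`
together with `∏_{i<n} (q^n - q^i) = (-1)^n q^C(n,2) (q; q)_n` turns the first term of the right
side into the `[n choose r]_q` part of the left side, and the term `m = n - j` of the sum over `m`
into the `j`-th summand of the correction, once the sums over `r` and `j` are exchanged.
-/

/-- The `q`-Pochhammer symbol `(a; q)_m = ∏_{i=0}^{m-1} (1 - a q^i)` over `ℝ`. -/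
noncomputable def qPoch (a q : ℝ) (m : ℕ) : ℝ := ∏ i ∈ Finset.range m, (1 - a * q ^ i)

/-- The `q`-integer `[m]_q = 1 + q + ⋯ + q^{m-1}`. -/
noncomputable def qInt (q : ℝ) (m : ℕ) : ℝ := ∑ i ∈ Finset.range m, q ^ i

/-- The `q`-factorial `[m]!_q = [1]_q [2]_q ⋯ [m]_q`. -/
noncomputable def qFact (q : ℝ) (m : ℕ) : ℝ := ∏ i ∈ Finset.range m, qInt q (i + 1)

/-- The `q`-binomial coefficient `[n choose k]_q = [n]!_q / ([k]!_q [n-k]!_q)`. -/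
noncomputable def qBinom (q : ℝ) (n k : ℕ) : ℝ := qFact q n / (qFact q k * qFact q (n - k))

open Finset

lemma Nat.add_choose_two (a b : ℕ) : (a + b).choose 2 = a.choose 2 + b.choose 2 + a * b := by
  induction b with
  | zero => simp
  | succ b ih =>
    simp only [← add_assoc, Nat.choose_succ_succ', Nat.choose_one_right, ih]
    ring

lemma neg_one_pow_sub {R : Type*} [CommMonoid R] [HasDistribNeg R] {n r : ℕ} (h : r ≤ n) :
    (-1 : R) ^ (n - r) = (-1) ^ n * (-1) ^ r := by
  obtain ⟨c, rfl⟩ := Nat.exists_eq_add_of_le h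
  rw [Nat.add_sub_cancel_left, pow_add, mul_right_comm, ← pow_add, ← two_mul, pow_mul,
    neg_one_sq, one_pow, one_mul]

lemma sum_Icc_eq_sum_Icc_sub {M : Type*} [AddCommMonoid M] (f : ℕ → M) {a b n : ℕ}
    (ha : a ≤ n) (hb : b ≤ n) :
    ∑ m ∈ Icc a b, f m = ∑ j ∈ Icc (n - b) (n - a), f (n - j) :=
  sum_nbij' (n - ·) (n - ·) (by grind) (by grind) (by grind) (by grind) (by grind)

section

variable {q : ℝ}

lemma qInt_pos (hq : 0 < q) {m : ℕ} (hm : 0 < m) : 0 < qInt q m :=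
  sum_pos (fun i _ => pow_pos hq i) (nonempty_range_iff.mpr hm.ne')

lemma qFact_pos (hq : 0 < q) (m : ℕ) : 0 < qFact q m :=
  prod_pos fun i _ => qInt_pos hq i.succ_pos

lemma one_sub_pow_eq_mul_qInt (q : ℝ) (k : ℕ) : 1 - q ^ k = (1 - q) * qInt q k :=
  (mul_neg_geom_sum q k).symm

lemma qInt_add (q : ℝ) (a b : ℕ) : qInt q (a + b) = qInt q a + q ^ a * qInt q b := by
  simp only [qInt, sum_range_add, mul_sum, pow_add]

@[simp]
lemma qFact_zero (q : ℝ) : qFact q 0 = 1 :=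
  prod_range_zero _

lemma qFact_succ (q : ℝ) (m : ℕ) : qFact q (m + 1) = qFact q m * qInt q (m + 1) :=
  prod_range_succ _ m

lemma qPoch_pow_succ_mul_qFact (q : ℝ) (a k : ℕ) :
    qPoch (q ^ (a + 1)) q k * qFact q a = (1 - q) ^ k * qFact q (a + k) := by
  induction k with
  | zero => simp [qPoch]
  | succ k ih =>
    rw [qPoch, prod_range_succ, ← qPoch, mul_right_comm, ih, ← add_assoc, qFact_succ,
      ← pow_add, one_sub_pow_eq_mul_qInt, add_right_comm]
    ring

lemma qPoch_self (q : ℝ) (m : ℕ) : qPoch q q m = (1 - q) ^ m * qFact q m := by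
  simpa using qPoch_pow_succ_mul_qFact q 0 m

lemma prod_pow_sub_pow_eq_qPoch (q : ℝ) (n : ℕ) :
    ∏ i ∈ range n, (q ^ n - q ^ i) = (-1) ^ n * q ^ n.choose 2 * qPoch q q n := by
  have factor : ∀ i ∈ range n, q ^ n - q ^ i = -q ^ i * (1 - q * q ^ (n - 1 - i)) := by
    intro i hi
    rw [← pow_succ', show n - 1 - i + 1 = n - i by grind, neg_mul, mul_sub,
      ← pow_add, Nat.add_sub_cancel' (mem_range.mp hi).le]
    ring
  rw [prod_congr rfl factor, prod_mul_distrib, prod_range_reflect (fun i => 1 - q * q ^ i),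
    prod_neg, prod_pow_eq_pow_sum, sum_range_id, Nat.choose_two_right, card_range, qPoch]

lemma qBinom_zero_right (hq : 0 < q) (m : ℕ) : qBinom q m 0 = 1 := by
  simp [qBinom, (qFact_pos hq m).ne']

lemma qBinom_self (hq : 0 < q) (m : ℕ) : qBinom q m m = 1 := by
  simp [qBinom, (qFact_pos hq m).ne']

lemma qBinom_succ_succ (hq : 0 < q) {m r : ℕ} (h : r < m) :
    qBinom q (m + 1) (r + 1) = q ^ (r + 1) * qBinom q m (r + 1) + qBinom q m r := by
  obtain ⟨c, rfl⟩ : ∃ c, m = r + 1 + c := ⟨m - (r + 1), by omega⟩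
  have hsplit : qInt q (r + 1 + c + 1) = qInt q (r + 1) + q ^ (r + 1) * qInt q (c + 1) := by
    rw [add_assoc, qInt_add]
  simp only [qBinom, show r + 1 + c + 1 - (r + 1) = c + 1 by omega,
    show r + 1 + c - (r + 1) = c by omega, show r + 1 + c - r = c + 1 by omega, qFact_succ]
  have := qFact_pos hq r
  have := qFact_pos hq c
  have := qInt_pos hq r.succ_pos
  have := qInt_pos hq c.succ_pos
  field_simp
  rw [hsplit]
  ring

noncomputable def gaussCoeff (q : ℝ) (m r : ℕ) : ℝ :=
  (-1) ^ r * q ^ (m - r).choose 2 * qBinom q m r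

lemma gaussCoeff_succ_zero (hq : 0 < q) (m : ℕ) :
    gaussCoeff q (m + 1) 0 = q ^ m * gaussCoeff q m 0 := by
  simp only [gaussCoeff, qBinom_zero_right hq, Nat.sub_zero, Nat.choose_succ_succ',
    Nat.choose_one_right, pow_add]
  ring

lemma gaussCoeff_succ_self (hq : 0 < q) (m : ℕ) :
    gaussCoeff q (m + 1) (m + 1) = -gaussCoeff q m m := by
  simp [gaussCoeff, qBinom_self hq, pow_succ]

lemma gaussCoeff_succ_succ (hq : 0 < q) {m r : ℕ} (h : r < m) :
    gaussCoeff q (m + 1) (r + 1) = q ^ m * gaussCoeff q m (r + 1) - gaussCoeff q m r := by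
  obtain ⟨c, rfl⟩ : ∃ c, m = r + 1 + c := ⟨m - (r + 1), by omega⟩
  simp only [gaussCoeff, qBinom_succ_succ hq h, show r + 1 + c + 1 - (r + 1) = c + 1 by omega,
    show r + 1 + c - (r + 1) = c by omega, show r + 1 + c - r = c + 1 by omega,
    Nat.choose_succ_succ', Nat.choose_one_right, pow_add, pow_succ]
  ring

lemma prod_pow_sub_eq_sum_gaussCoeff (hq : 0 < q) (m : ℕ) (x : ℝ) :
    ∏ i ∈ range m, (q ^ i - x) = ∑ r ∈ range (m + 1), gaussCoeff q m r * x ^ r := by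
  induction m with
  | zero => simp [gaussCoeff, qBinom_self hq]
  | succ m ih =>
    have middle : ∀ r ∈ range m, gaussCoeff q (m + 1) (r + 1) * x ^ (r + 1)
        = q ^ m * (gaussCoeff q m (r + 1) * x ^ (r + 1)) - x * (gaussCoeff q m r * x ^ r) := by
      intro r hr
      rw [gaussCoeff_succ_succ hq (mem_range.mp hr)]
      ring
    have low := sum_range_succ' (fun r => gaussCoeff q m r * x ^ r) m
    have high := sum_range_succ (fun r => gaussCoeff q m r * x ^ r) m
    rw [prod_range_succ, ih, sum_range_succ' _ (m + 1),
      sum_range_succ (fun r => gaussCoeff q (m + 1) (r + 1) * x ^ (r + 1)) m, sum_congr rfl middle,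
      sum_sub_distrib, ← mul_sum, ← mul_sum, gaussCoeff_succ_zero hq, gaussCoeff_succ_self hq]
    linear_combination q ^ m * low - x * high

lemma pow_choose_two_mul_qPoch_inv (hq : q ≠ 0) (m : ℕ) (x : ℝ) :
    q ^ m.choose 2 * qPoch x q⁻¹ m = ∏ i ∈ range m, (q ^ i - x) := by
  rw [Nat.choose_two_right, ← sum_range_id, ← prod_pow_eq_pow_sum, qPoch, ← prod_mul_distrib]
  refine prod_congr rfl fun i _ => ?_
  rw [inv_pow, mul_sub, mul_one, mul_left_comm, mul_inv_cancel₀ (pow_ne_zero i hq), mul_one]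

lemma qPoch_inv_div_qPoch_self_eq_sum (hq : 0 < q) (m : ℕ) (x : ℝ) :
    qPoch x q⁻¹ m / qPoch q q m
      = ∑ r ∈ range (m + 1), gaussCoeff q m r / (q ^ m.choose 2 * qPoch q q m) * x ^ r := by
  rw [← mul_div_mul_left _ _ (pow_ne_zero (m.choose 2) hq.ne'),
    pow_choose_two_mul_qPoch_inv hq.ne', prod_pow_sub_eq_sum_gaussCoeff hq, sum_div]
  exact sum_congr rfl fun r _ => div_mul_eq_mul_div _ _ _ |>.symm

lemma hook_expansion_leading_sum (hq : 0 < q) (hq1 : q ≠ 1) (n : ℕ) (x : ℝ) :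
    ∑ r ∈ range (n + 1), (-1) ^ (n - r) * q ^ (n - r).choose 2 * qBinom q n r * x ^ r
      = (∏ i ∈ range n, (q ^ n - q ^ i)) * (qPoch x q⁻¹ n / qPoch q q n) := by
  rw [qPoch_inv_div_qPoch_self_eq_sum hq, mul_sum]
  refine sum_congr rfl fun r hr => ?_
  have := qFact_pos hq n
  have : 1 - q ≠ 0 := sub_ne_zero.mpr hq1.symm
  rw [prod_pow_sub_pow_eq_qPoch, gaussCoeff, neg_one_pow_sub (mem_range_succ_iff.mp hr),
    qPoch_self]
  field_simp

lemma hook_expansion_correction_coeff (hq : 0 < q) (hq1 : q ≠ 1) {n d r j : ℕ} (hj : 1 ≤ j)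
    (hjd : j + d ≤ n) (hrj : r + j ≤ n) :
    (-1) ^ (n - r) * q ^ (n - r).choose 2 *
        ((1 - q) * qInt q n / qFact q r *
          (q ^ ((j * r : ℤ) - d) * (qFact q (n - j) / qFact q (n - r - j)) *
            qPoch (q ^ (n - d - j + 1)) q (j - 1)))
      = (∏ i ∈ range n, (q ^ n - q ^ i)) *
          (q ^ (-(d : ℤ)) * (qFact q (n - j) * qFact q (n - d - 1) /
            (qFact q (n - j - d) * qFact q (n - 1)) *
              (gaussCoeff q (n - j) r / (q ^ (n - j).choose 2 * qPoch q q (n - j))))) := by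
  -- parametrize so that every truncated subtraction below becomes a sum
  obtain ⟨k, rfl⟩ : ∃ k, j = k + 1 := ⟨j - 1, by omega⟩
  obtain ⟨c, hc⟩ : ∃ c, n = r + k + c + 1 := ⟨n - r - (k + 1), by omega⟩
  obtain ⟨e, he⟩ : ∃ e, n - d - (k + 1) = e := ⟨_, rfl⟩
  have hpoch : qPoch (q ^ (e + 1)) q k = (1 - q) ^ k * qFact q (e + k) / qFact q e :=
    eq_div_of_mul_eq (qFact_pos hq e).ne' (qPoch_pow_succ_mul_qFact q e k)
  rw [neg_one_pow_sub (by omega : r ≤ n), he, show n - d - 1 = e + k by omega,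
    show n - (k + 1) - d = e by omega, show n - r - (k + 1) = c by omega,
    show n - r = k + 1 + c by omega, show n - (k + 1) = r + c by omega,
    show n - 1 = r + k + c by omega, Nat.add_sub_cancel, prod_pow_sub_pow_eq_qPoch, hpoch,
    qPoch_self, qPoch_self, gaussCoeff, qBinom, Nat.add_sub_cancel_left, hc, zpow_sub₀ hq.ne',
    zpow_neg, ← Nat.cast_mul, zpow_natCast, zpow_natCast, qFact_succ]
  simp only [Nat.add_choose_two, Nat.choose_succ_self]
  have := qFact_pos hq r
  have := qFact_pos hq c
  have := qFact_pos hq e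
  have := qFact_pos hq (e + k)
  have := qFact_pos hq (r + k + c)
  have := qFact_pos hq (r + c)
  have := qInt_pos hq (r + k + c).succ_pos
  have : 1 - q ≠ 0 := sub_ne_zero.mpr hq1.symm
  field_simp
  ring

lemma hook_expansion_correction_sum (hq : 0 < q) (hq1 : q ≠ 1) {n d j : ℕ} (hj : 1 ≤ j)
    (hjd : j + d ≤ n) (x : ℝ) :
    ∑ r ∈ range (n - j + 1), (-1) ^ (n - r) * q ^ (n - r).choose 2 *
        ((1 - q) * qInt q n / qFact q r *
          (q ^ ((j * r : ℤ) - d) * (qFact q (n - j) / qFact q (n - r - j)) *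
            qPoch (q ^ (n - d - j + 1)) q (j - 1))) * x ^ r
      = (∏ i ∈ range n, (q ^ n - q ^ i)) *
          (q ^ (-(d : ℤ)) * (qFact q (n - j) * qFact q (n - d - 1) /
            (qFact q (n - j - d) * qFact q (n - 1)) *
              (qPoch x q⁻¹ (n - j) / qPoch q q (n - j)))) := by
  rw [qPoch_inv_div_qPoch_self_eq_sum hq, mul_sum, mul_sum, mul_sum]
  refine sum_congr rfl fun r hr => ?_
  rw [hook_expansion_correction_coeff hq hq1 hj hjd (by grind)]
  ring

end

/-- Proposition 3.1: the expansion of the character generating function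
`f_{(1, ⟨d, n⟩)}(x)` in the basis `(x; q⁻¹)_m / (q; q)_m`. -/
theorem character_genfun_hook_expansion
    (q : ℝ) (hq : 1 < q) (n d : ℕ) (hn : 1 ≤ n) (hd : d ≤ n - 1) (x : ℝ) :
    ∑ r ∈ Finset.range (n + 1),
      (-1 : ℝ) ^ (n - r) * q ^ ((n - r) * (n - r - 1) / 2) *
        (qBinom q n r +
          ((1 - q) * qInt q n / qFact q r) *
            ∑ j ∈ Finset.Icc 1 (n - max r d),
              q ^ ((j * r : ℤ) - d) * (qFact q (n - j) / qFact q (n - r - j)) *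
                qPoch (q ^ (n - d - j + 1)) q (j - 1)) *
        x ^ r
    = (∏ i ∈ Finset.range n, ((q : ℝ) ^ n - q ^ i)) *
        (qPoch x q⁻¹ n / qPoch q q n +
          q ^ (-(d : ℤ)) *
            ∑ m ∈ Finset.Icc d (n - 1),
              ((qFact q m * qFact q (n - d - 1)) / (qFact q (m - d) * qFact q (n - 1))) *
                (qPoch x q⁻¹ m / qPoch q q m)) := by
  have hq0 : 0 < q := zero_lt_one.trans hq
  simp only [← Nat.choose_two_right, mul_add, add_mul, mul_sum, sum_mul, sum_add_distrib]
  rw [hook_expansion_leading_sum hq0 hq.ne',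
    sum_comm' (t' := Icc 1 (n - d)) (s' := fun j => range (n - j + 1)) (by grind),
    sum_congr rfl fun j hj =>
      hook_expansion_correction_sum hq0 hq.ne' (mem_Icc.mp hj).1 (by grind) x]
  conv_rhs => rw [sum_Icc_eq_sum_Icc_sub _ (by omega : d ≤ n) (by omega : n - 1 ≤ n),
    Nat.sub_sub_self hn]
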